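/- Let L be the operator sending a function f to the derivative of (sec·f), i.e. L(f)(x) = d/dx (sec(x)·f(x)). Then for every natural number m ≥ 0 and every real x with cos(x) ≠ 0, L^{2m}(sec)(x) = (2m)! · sec(x) · ∑_{k=0}^{m} C(2m+1, 2k+1) · tan(x)^{2m−2k} · (1 + tan(x)^2)^{m+k}. -/

import Mathlib

/-- sec(x) = 1/cos(x). -/
noncomputable def sec (x : ℝ) : ℝ := (Real.cos x)⁻¹

/-- The operator L sending f to the derivative of sec·f. -/
noncomputable def L (f : ℝ → ℝ) : ℝ → ℝ := deriv (fun x => sec x * f x)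

/-!
With `u = sec + tan` and `v = sec - tan` one has `u' = sec · u` and `v' = -sec · v`, hence
`(sec · u)' = sec · u²` and `(sec · v)' = -sec · v²`. Consequently
`L (sec ^ n · u ^ (n + 1)) = (n + 1) · sec ^ (n + 1) · u ^ (n + 2)`, similarly for `v` with a sign,
and since `sec = (u + v) / 2`, induction gives the closed form
`L^[n] sec = n! / 2 · sec ^ n · (u ^ (n + 1) + (-1) ^ n · v ^ (n + 1))`.
For `n = 2m` the odd-index terms of the binomial expansions of `u ^ (2m+1) + v ^ (2m+1)` survive,
and `sec² = 1 + tan²` turns the result into the stated sum.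
-/

open Real Finset Nat

theorem Finset.sum_range_two_mul {M : Type*} [AddCommMonoid M] (f : ℕ → M) (m : ℕ) :
    ∑ j ∈ range (2 * m), f j = ∑ k ∈ range m, (f (2 * k) + f (2 * k + 1)) := by
  induction m with
  | zero => simp
  | succ m ih =>
    rw [Nat.mul_succ, sum_range_succ, sum_range_succ, ih, sum_range_succ, add_assoc]

theorem add_pow_add_sub_pow_odd {R : Type*} [CommRing R] (s t : R) (m : ℕ) :
    (s + t) ^ (2 * m + 1) + (s - t) ^ (2 * m + 1) =
      ∑ k ∈ range (m + 1), 2 * ((2 * m + 1).choose (2 * k + 1) : R) * s ^ (2 * k + 1) *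
        t ^ (2 * m - 2 * k) := by
  rw [sub_eq_add_neg, add_pow, add_pow, ← sum_add_distrib, show 2 * m + 1 + 1 = 2 * (m + 1) by ring,
    Finset.sum_range_two_mul]
  refine sum_congr rfl fun k hk => ?_
  have hkm : k ≤ m := Nat.lt_succ_iff.mp (mem_range.mp hk)
  rw [show 2 * m + 1 - 2 * k = 2 * (m - k) + 1 by omega,
    show 2 * m + 1 - (2 * k + 1) = 2 * m - 2 * k by omega,
    Odd.neg_pow ⟨m - k, rfl⟩, Even.neg_pow ⟨m - k, by omega⟩]
  ring

theorem one_add_tan_sq_eq_sec_sq {x : ℝ} (hx : cos x ≠ 0) : 1 + tan x ^ 2 = sec x ^ 2 := by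
  rw [sec, inv_pow, ← inv_one_add_tan_sq hx, inv_inv]

theorem hasDerivAt_sec {x : ℝ} (hx : cos x ≠ 0) : HasDerivAt sec (sec x * tan x) x := by
  refine ((hasDerivAt_cos x).inv hx).congr_deriv ?_
  rw [sec, tan_eq_sin_div_cos]
  field_simp

theorem hasDerivAt_tan_eq_sec_sq {x : ℝ} (hx : cos x ≠ 0) : HasDerivAt tan (sec x ^ 2) x := by
  refine (hasDerivAt_tan hx).congr_deriv ?_
  rw [sec, inv_pow, one_div]

theorem hasDerivAt_sec_mul_sec_add_mul_tan {ε x : ℝ} (hε : ε ^ 2 = 1) (hx : cos x ≠ 0) :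
    HasDerivAt (fun y => sec y * (sec y + ε * tan y)) (ε * sec x * (sec x + ε * tan x) ^ 2) x := by
  refine ((hasDerivAt_sec hx).mul
    ((hasDerivAt_sec hx).add ((hasDerivAt_tan_eq_sec_sq hx).const_mul ε))).congr_deriv ?_
  simp only [Pi.add_apply]
  linear_combination -(2 * sec x ^ 2 * tan x + ε * sec x * tan x ^ 2) * hε

noncomputable def secTanTerm (ε : ℝ) (n : ℕ) (x : ℝ) : ℝ :=
  ε ^ n * sec x ^ n * (sec x + ε * tan x) ^ (n + 1)

theorem hasDerivAt_sec_mul_secTanTerm {ε x : ℝ} (hε : ε ^ 2 = 1) (hx : cos x ≠ 0) (n : ℕ) :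
    HasDerivAt (fun y => sec y * secTanTerm ε n y) ((n + 1) * secTanTerm ε (n + 1) x) x := by
  have h := ((hasDerivAt_sec_mul_sec_add_mul_tan hε hx).pow (n + 1)).const_mul (ε ^ n)
  refine (h.congr_deriv ?_).congr_of_eventuallyEq (.of_forall fun y => ?_)
  · simp only [secTanTerm, mul_pow]
    push_cast
    ring
  · simp only [secTanTerm, Pi.pow_apply, mul_pow]
    ring

theorem iterate_L_sec {x : ℝ} (hx : cos x ≠ 0) (n : ℕ) :
    L^[n] sec x = n ! / 2 * (secTanTerm 1 n x + secTanTerm (-1) n x) := by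
  induction n generalizing x with
  | zero =>
    simp only [Function.iterate_zero_apply, secTanTerm, factorial_zero, pow_zero]
    ring
  | succ n ih =>
    have hloc : (fun y => sec y * L^[n] sec y) =ᶠ[nhds x]
        fun y => n ! / 2 * (sec y * secTanTerm 1 n y + sec y * secTanTerm (-1) n y) := by
      filter_upwards [continuous_cos.continuousAt.eventually_ne hx] with y hy
      rw [ih hy]
      ring
    have hderiv := ((hasDerivAt_sec_mul_secTanTerm (one_pow 2) hx n).add
      (hasDerivAt_sec_mul_secTanTerm neg_one_sq hx n)).const_mul (n ! / 2 : ℝ)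
    rw [Function.iterate_succ_apply', L, hloc.deriv_eq]
    refine hderiv.deriv.trans ?_
    push_cast [Nat.factorial_succ]
    ring

theorem iterate_L_sec_even (m : ℕ) (x : ℝ) (hx : Real.cos x ≠ 0) :
    L^[2 * m] sec x =
      ((2 * m).factorial : ℝ) * sec x *
        ∑ k ∈ Finset.range (m + 1),
          ((2 * m + 1).choose (2 * k + 1)) *
            Real.tan x ^ (2 * m - 2 * k) * (1 + Real.tan x ^ 2) ^ (m + k) := by
  have hterms : secTanTerm 1 (2 * m) x + secTanTerm (-1) (2 * m) x =
      sec x ^ (2 * m) * ((sec x + tan x) ^ (2 * m + 1) + (sec x - tan x) ^ (2 * m + 1)) := by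
    simp only [secTanTerm, one_pow, one_mul, (even_two_mul m).neg_one_pow, neg_one_mul,
      ← sub_eq_add_neg]
    ring
  rw [iterate_L_sec hx, hterms, add_pow_add_sub_pow_odd, one_add_tan_sq_eq_sec_sq hx, mul_sum,
    mul_sum, mul_sum]
  refine sum_congr rfl fun k _ => ?_
  ring
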